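/- arXiv:1112.6212 — 2 statements merged into one kernel-verified Lean document; each statement's English description precedes it below -/
import Mathlib

section
/- For a right-stochastic matrix A (rows sum to 1, nonnegative entries) of size N×N, the induced block maximum norm of A ⊗ I_M equals 1, where the block maximum norm of a block vector x = col{x_1,...,x_N} with x_k ∈ C^M is max_k ‖x_k‖_2 and the matrix norm is the induced operator norm. -/
open Matrix Kronecker ComplexOrder

/-- The block maximum norm of a block vector `x = col{x_1,...,x_N}` with `x_k ∈ ℂ^M`:
`‖x‖_{b,∞} = max_k ‖x_k‖_2`. -/
noncomputable def blockNorm (N M : ℕ) (x : Fin N × Fin M → ℂ) : ℝ :=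
  ⨆ k : Fin N, Real.sqrt (∑ j : Fin M, ‖x (k, j)‖ ^ 2)

/-- The matrix norm induced by the block maximum norm. -/
noncomputable def inducedBlockNorm (N M : ℕ)
    (A : Matrix (Fin N × Fin M) (Fin N × Fin M) ℂ) : ℝ :=
  sSup {r : ℝ | ∃ x : Fin N × Fin M → ℂ, x ≠ 0 ∧
    r = blockNorm N M (A.mulVec x) / blockNorm N M x}

/-!
Each block of `(A ⊗ I_M) x` is the combination `∑ l, A k l • x_l` of the blocks of `x`, so by
the triangle inequality its norm is at most `(∑ l, ‖A k l‖) ‖x‖_{b,∞}`, and for a right-stochastic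
`A` these row sums of absolute values are `1`. The bound is attained at the all-ones vector,
which `A ⊗ I_M` fixes.
-/

lemma ofReal_sum_norm_of_nonneg {ι : Type*} (s : Finset ι) {f : ι → ℂ}
    (hf : ∀ i ∈ s, 0 ≤ f i) : ((∑ i ∈ s, ‖f i‖ : ℝ) : ℂ) = ∑ i ∈ s, f i := by
  push_cast
  exact Finset.sum_congr rfl fun i hi => Complex.norm_of_nonneg' (hf i hi)

section

variable {N M : ℕ}

noncomputable def block (x : Fin N × Fin M → ℂ) (k : Fin N) : EuclideanSpace ℂ (Fin M) :=
  WithLp.toLp 2 fun j => x (k, j)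

lemma blockNorm_eq_iSup_norm_block (x : Fin N × Fin M → ℂ) :
    blockNorm N M x = ⨆ k, ‖block x k‖ := by
  simp only [blockNorm, EuclideanSpace.norm_eq, block]

lemma blockNorm_nonneg (x : Fin N × Fin M → ℂ) : 0 ≤ blockNorm N M x :=
  Real.iSup_nonneg fun _ => Real.sqrt_nonneg _

lemma norm_block_le_blockNorm (x : Fin N × Fin M → ℂ) (k : Fin N) :
    ‖block x k‖ ≤ blockNorm N M x := by
  rw [blockNorm_eq_iSup_norm_block]
  exact le_ciSup (Set.finite_range fun k => ‖block x k‖).bddAbove k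

lemma blockNorm_pos {x : Fin N × Fin M → ℂ} (hx : x ≠ 0) : 0 < blockNorm N M x := by
  obtain ⟨⟨k, j⟩, hkj⟩ := Function.ne_iff.mp hx
  have hblock : block x k ≠ 0 := fun h => hkj (congrArg (fun v => v.ofLp j) h)
  exact (norm_pos_iff.mpr hblock).trans_le (norm_block_le_blockNorm x k)

lemma kronecker_one_mulVec_apply (A : Matrix (Fin N) (Fin N) ℂ) (x : Fin N × Fin M → ℂ)
    (k : Fin N) (j : Fin M) :
    ((A ⊗ₖ (1 : Matrix (Fin M) (Fin M) ℂ)) *ᵥ x) (k, j) = ∑ l, A k l * x (l, j) := by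
  simp [mulVec, dotProduct, Fintype.sum_prod_type, one_apply]

lemma block_kronecker_one_mulVec (A : Matrix (Fin N) (Fin N) ℂ) (x : Fin N × Fin M → ℂ)
    (k : Fin N) :
    block ((A ⊗ₖ (1 : Matrix (Fin M) (Fin M) ℂ)) *ᵥ x) k = ∑ l, A k l • block x l := by
  ext j
  simp [block, kronecker_one_mulVec_apply, WithLp.ofLp_sum]

lemma blockNorm_kronecker_one_mulVec_le {A : Matrix (Fin N) (Fin N) ℂ} {c : ℝ}
    (hA : ∀ k, ∑ l, ‖A k l‖ ≤ c) (x : Fin N × Fin M → ℂ) :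
    blockNorm N M ((A ⊗ₖ (1 : Matrix (Fin M) (Fin M) ℂ)) *ᵥ x) ≤ c * blockNorm N M x := by
  rcases isEmpty_or_nonempty (Fin N) with hN | hN
  · simp [blockNorm]
  rw [blockNorm_eq_iSup_norm_block]
  refine ciSup_le fun k => ?_
  calc ‖block ((A ⊗ₖ (1 : Matrix (Fin M) (Fin M) ℂ)) *ᵥ x) k‖
      = ‖∑ l, A k l • block x l‖ := by rw [block_kronecker_one_mulVec]
    _ ≤ ∑ l, ‖A k l‖ * ‖block x l‖ := norm_sum_le_of_le _ fun l _ => (norm_smul _ _).le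
    _ ≤ ∑ l, ‖A k l‖ * blockNorm N M x := by gcongr; exact norm_block_le_blockNorm x _
    _ = (∑ l, ‖A k l‖) * blockNorm N M x := (Finset.sum_mul _ _ _).symm
    _ ≤ c * blockNorm N M x := by gcongr; exacts [blockNorm_nonneg x, hA k]

lemma inducedBlockNorm_eq_of_le_of_eq {B : Matrix (Fin N × Fin M) (Fin N × Fin M) ℂ} {c : ℝ}
    (hle : ∀ x, blockNorm N M (B *ᵥ x) ≤ c * blockNorm N M x) {x₀ : Fin N × Fin M → ℂ}
    (hx₀ : x₀ ≠ 0) (heq : blockNorm N M (B *ᵥ x₀) = c * blockNorm N M x₀) :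
    inducedBlockNorm N M B = c := by
  refine IsGreatest.csSup_eq ⟨⟨x₀, hx₀, ?_⟩, ?_⟩
  · rw [heq, mul_div_cancel_right₀ _ (blockNorm_pos hx₀).ne']
  · rintro r ⟨x, hx, rfl⟩
    exact (div_le_iff₀ (blockNorm_pos hx)).mpr (hle x)

end

/-- For a right-stochastic `N × N` matrix `A` (nonnegative entries, rows summing to one),
the induced block maximum norm of `A ⊗ I_M` equals `1`. -/
theorem blockMaxNorm_kronecker_rightStochastic_eq_one
    {N M : ℕ} (hN : 0 < N) (hM : 0 < M)
    (A : Matrix (Fin N) (Fin N) ℂ)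
    (hpos : ∀ i j, 0 ≤ A i j)
    (hrow : ∀ i, ∑ j, A i j = 1) :
    inducedBlockNorm N M (A ⊗ₖ (1 : Matrix (Fin M) (Fin M) ℂ)) = 1 := by
  have hnorm_row : ∀ k, ∑ l, ‖A k l‖ = 1 := fun k => by
    exact_mod_cast (ofReal_sum_norm_of_nonneg _ fun l _ => hpos k l).trans (hrow k)
  let ones : Fin N × Fin M → ℂ := fun _ => 1
  have hones : ones ≠ 0 := Function.ne_iff.mpr ⟨(⟨0, hN⟩, ⟨0, hM⟩), one_ne_zero⟩
  have hfix : (A ⊗ₖ (1 : Matrix (Fin M) (Fin M) ℂ)) *ᵥ ones = ones := by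
    ext ⟨k, j⟩
    simp [ones, kronecker_one_mulVec_apply, hrow]
  refine inducedBlockNorm_eq_of_le_of_eq
    (blockNorm_kronecker_one_mulVec_le fun k => (hnorm_row k).le) hones ?_
  rw [hfix, one_mul]
end

section
/- If A_1 and A_2 are N×N left-stochastic matrices (columns sum to 1, nonnegative entries) and D ∈ C^{NM×NM} is block diagonal Hermitian with block size M×M, then the spectral radius satisfies ρ(A_2^T ⊗ I_M · D · A_1^T ⊗ I_M) ≤ ρ(D). In particular, if ρ(D) < 1 then the product matrix is stable. -/
/-! Measure vectors on `Fin N × Fin M` by the block maximum norm `max_k ‖v (k, ·)‖₂`.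
Since `A` is left-stochastic, `Aᵀ ⊗ I` replaces each block by a convex combination of blocks,
so it does not increase this norm. The block-diagonal `D` acts on block `k` through the
Hermitian block `D_k`, whose operator norm equals its spectral radius; every eigenvalue of `D_k`
is one of `D`, so `D` scales the norm by at most `ρ(D)`. An eigenvector of the product then
shows that each of its eigenvalues has modulus at most `ρ(D)`. -/

open Matrix Kronecker
open scoped ENNReal NNReal Matrix.Norms.L2Operator

namespace Matrix

theorem mem_spectrum_iff_exists_mulVec_eq_smul {n K : Type*} [Field K] [Fintype n]
    [DecidableEq n] (A : Matrix n n K) (μ : K) :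
    μ ∈ spectrum K A ↔ ∃ v, v ≠ 0 ∧ A *ᵥ v = μ • v := by
  rw [← spectrum_toLin', ← Module.End.hasEigenvalue_iff_mem_spectrum]
  constructor
  · intro h
    obtain ⟨v, hv, hv0⟩ := h.exists_hasEigenvector
    exact ⟨v, hv0, by simpa using Module.End.mem_eigenspace_iff.1 hv⟩
  · rintro ⟨v, hv0, hv⟩
    exact Module.End.hasEigenvalue_of_hasEigenvector
      ⟨Module.End.mem_eigenspace_iff.2 (by simpa using hv), hv0⟩

section BlockDiagonal

variable {ι κ R : Type*} [Fintype ι] [Fintype κ]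

theorem curry_mulVec_of_blockDiagonal [NonUnitalNonAssocSemiring R]
    {D : Matrix (ι × κ) (ι × κ) R} (hD : ∀ p q : ι × κ, p.1 ≠ q.1 → D p q = 0)
    (v : ι × κ → R) (k : ι) :
    Function.curry (D *ᵥ v) k = D.submatrix (Prod.mk k) (Prod.mk k) *ᵥ Function.curry v k := by
  funext m
  simp only [Function.curry_apply, mulVec, dotProduct, Fintype.sum_prod_type, submatrix_apply]
  refine Finset.sum_eq_single k (fun l _ hl => Finset.sum_eq_zero fun m' _ => ?_) (by simp)
  rw [hD (k, m) (l, m') (Ne.symm hl), zero_mul]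

theorem spectrum_submatrix_subset_of_blockDiagonal [Field R] [DecidableEq ι] [DecidableEq κ]
    {D : Matrix (ι × κ) (ι × κ) R} (hD : ∀ p q : ι × κ, p.1 ≠ q.1 → D p q = 0) (k : ι) :
    spectrum R (D.submatrix (Prod.mk k) (Prod.mk k)) ⊆ spectrum R D := by
  intro μ hμ
  obtain ⟨w, hw0, hw⟩ := (mem_spectrum_iff_exists_mulVec_eq_smul _ μ).1 hμ
  refine (mem_spectrum_iff_exists_mulVec_eq_smul D μ).2
    ⟨Function.uncurry (Pi.single k w), fun h => hw0 ?_, ?_⟩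
  · exact funext fun m => by simpa using congr_fun h (k, m)
  · ext ⟨l, m⟩
    have := congr_fun (curry_mulVec_of_blockDiagonal hD (Function.uncurry (Pi.single k w)) l) m
    simp only [Function.curry_apply] at this
    rw [this]
    rcases eq_or_ne l k with rfl | hl
    · simp [hw]
    · simp [hl]

theorem nnnorm_submatrix_le_of_blockDiagonal [DecidableEq ι] [DecidableEq κ]
    {D : Matrix (ι × κ) (ι × κ) ℂ} (hD : ∀ p q : ι × κ, p.1 ≠ q.1 → D p q = 0)
    (hH : D.IsHermitian) (k : ι) :
    ‖D.submatrix (Prod.mk k) (Prod.mk k)‖₊ ≤ ‖D‖₊ := by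
  rw [← ENNReal.coe_le_coe, ← (hH.submatrix _).isSelfAdjoint.spectralRadius_eq_nnnorm,
    ← hH.isSelfAdjoint.spectralRadius_eq_nnnorm]
  exact biSup_mono (spectrum_submatrix_subset_of_blockDiagonal hD k)

end BlockDiagonal

section BlockSupNorm

variable {ι ι' κ : Type*} [Fintype ι] [Fintype κ]

noncomputable def blockSupNorm (v : ι × κ → ℂ) : ℝ≥0 :=
  Finset.univ.sup fun k => ‖WithLp.toLp 2 (Function.curry v k)‖₊

theorem nnnorm_curry_le_blockSupNorm (v : ι × κ → ℂ) (k : ι) :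
    ‖WithLp.toLp 2 (Function.curry v k)‖₊ ≤ blockSupNorm v :=
  Finset.le_sup (f := fun k => ‖WithLp.toLp 2 (Function.curry v k)‖₊) (Finset.mem_univ k)

theorem blockSupNorm_smul (c : ℂ) (v : ι × κ → ℂ) :
    blockSupNorm (c • v) = ‖c‖₊ * blockSupNorm v := by
  simp only [blockSupNorm, NNReal.mul_finset_sup]
  congr 1
  funext k
  rw [← nnnorm_smul, ← WithLp.toLp_smul]
  rfl

theorem blockSupNorm_pos {v : ι × κ → ℂ} (hv : v ≠ 0) : 0 < blockSupNorm v := by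
  obtain ⟨⟨k, m⟩, hkm⟩ := Function.ne_iff.1 hv
  refine (nnnorm_pos.2 fun h => hkm ?_).trans_le (nnnorm_curry_le_blockSupNorm v k)
  simpa using congr_arg (fun w : EuclideanSpace ℂ κ => w m) h

theorem curry_kronecker_one_mulVec {R : Type*} [CommSemiring R] [Fintype ι'] [DecidableEq κ]
    (B : Matrix ι' ι R) (v : ι × κ → R) (k : ι') :
    Function.curry ((B ⊗ₖ (1 : Matrix κ κ R)) *ᵥ v) k = ∑ l, B k l • Function.curry v l := by
  funext m
  simp [mulVec, dotProduct, Fintype.sum_prod_type, one_apply, Finset.sum_apply]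

theorem blockSupNorm_kronecker_one_mulVec_le [Fintype ι'] [DecidableEq κ] (A : Matrix ι ι' ℝ)
    (hA : ∀ l k, 0 ≤ A l k) (hcol : ∀ k, ∑ l, A l k ≤ 1) (v : ι × κ → ℂ) :
    blockSupNorm ((A.transpose.map Complex.ofReal ⊗ₖ (1 : Matrix κ κ ℂ)) *ᵥ v)
      ≤ blockSupNorm v := by
  refine Finset.sup_le fun k _ => ?_
  rw [curry_kronecker_one_mulVec, WithLp.toLp_sum, ← NNReal.coe_le_coe, coe_nnnorm]
  calc ‖∑ l, WithLp.toLp 2 ((A.transpose.map Complex.ofReal) k l • Function.curry v l)‖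
      ≤ ∑ l, ‖WithLp.toLp 2 ((A.transpose.map Complex.ofReal) k l • Function.curry v l)‖ :=
        norm_sum_le _ _
    _ ≤ ∑ l, A l k * blockSupNorm v := by
        refine Finset.sum_le_sum fun l _ => ?_
        rw [WithLp.toLp_smul, norm_smul]
        simp only [map_apply, transpose_apply, Complex.norm_real, Real.norm_of_nonneg (hA l k)]
        exact mul_le_mul_of_nonneg_left (nnnorm_curry_le_blockSupNorm v l) (hA l k)
    _ ≤ blockSupNorm v := by
        rw [← Finset.sum_mul]
        exact mul_le_of_le_one_left (NNReal.coe_nonneg _) (hcol k)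

theorem blockSupNorm_mulVec_le_of_blockDiagonal [DecidableEq ι] [DecidableEq κ]
    {D : Matrix (ι × κ) (ι × κ) ℂ} (hD : ∀ p q : ι × κ, p.1 ≠ q.1 → D p q = 0)
    (hH : D.IsHermitian) (v : ι × κ → ℂ) :
    blockSupNorm (D *ᵥ v) ≤ ‖D‖₊ * blockSupNorm v := by
  refine Finset.sup_le fun k _ => ?_
  rw [curry_mulVec_of_blockDiagonal hD]
  calc ‖WithLp.toLp 2 (D.submatrix (Prod.mk k) (Prod.mk k) *ᵥ Function.curry v k)‖₊
      ≤ ‖D.submatrix (Prod.mk k) (Prod.mk k)‖₊ * ‖WithLp.toLp 2 (Function.curry v k)‖₊ :=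
        l2_opNNNorm_mulVec _ (WithLp.toLp 2 (Function.curry v k))
    _ ≤ ‖D‖₊ * blockSupNorm v :=
        mul_le_mul' (nnnorm_submatrix_le_of_blockDiagonal hD hH k)
          (nnnorm_curry_le_blockSupNorm v k)

theorem spectralRadius_le_of_blockSupNorm_mulVec_le [DecidableEq ι] [DecidableEq κ]
    {T : Matrix (ι × κ) (ι × κ) ℂ} {c : ℝ≥0}
    (hT : ∀ v, blockSupNorm (T *ᵥ v) ≤ c * blockSupNorm v) : spectralRadius ℂ T ≤ c := by
  refine iSup₂_le fun μ hμ => ?_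
  obtain ⟨v, hv0, hv⟩ := (mem_spectrum_iff_exists_mulVec_eq_smul T μ).1 hμ
  have hμv := hT v
  rw [hv, blockSupNorm_smul] at hμv
  exact ENNReal.coe_le_coe.2 (le_of_mul_le_mul_right hμv (blockSupNorm_pos hv0))

end BlockSupNorm

end Matrix

/-- If `A_1, A_2` are `N × N` left-stochastic matrices (nonnegative entries, columns summing
to one) and `D` is block diagonal Hermitian with `M × M` blocks, then
`ρ((A_2ᵀ ⊗ I_M) D (A_1ᵀ ⊗ I_M)) ≤ ρ(D)`.  In particular, if `ρ(D) < 1` the product matrix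
is stable. -/
theorem spectralRadius_leftStochastic_sandwich_le
    {N M : ℕ} (A1 A2 : Matrix (Fin N) (Fin N) ℝ)
    (hA1pos : ∀ l k, 0 ≤ A1 l k) (hA2pos : ∀ l k, 0 ≤ A2 l k)
    (hA1col : ∀ k, ∑ l, A1 l k = 1) (hA2col : ∀ k, ∑ l, A2 l k = 1)
    (D : Matrix (Fin N × Fin M) (Fin N × Fin M) ℂ)
    (hDblock : ∀ p q : Fin N × Fin M, p.1 ≠ q.1 → D p q = 0)
    (hDherm : D.IsHermitian) :
    spectralRadius ℂ
        (((A2.transpose.map (Complex.ofReal)) ⊗ₖ (1 : Matrix (Fin M) (Fin M) ℂ)) * D *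
          ((A1.transpose.map (Complex.ofReal)) ⊗ₖ (1 : Matrix (Fin M) (Fin M) ℂ)))
      ≤ spectralRadius ℂ D ∧
    (spectralRadius ℂ D < 1 →
      spectralRadius ℂ
        (((A2.transpose.map (Complex.ofReal)) ⊗ₖ (1 : Matrix (Fin M) (Fin M) ℂ)) * D *
          ((A1.transpose.map (Complex.ofReal)) ⊗ₖ (1 : Matrix (Fin M) (Fin M) ℂ))) < 1) := by
  set B1 := (A1.transpose.map (Complex.ofReal)) ⊗ₖ (1 : Matrix (Fin M) (Fin M) ℂ)
  set B2 := (A2.transpose.map (Complex.ofReal)) ⊗ₖ (1 : Matrix (Fin M) (Fin M) ℂ)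
  have hρ : spectralRadius ℂ (B2 * D * B1) ≤ spectralRadius ℂ D := by
    rw [hDherm.isSelfAdjoint.spectralRadius_eq_nnnorm]
    refine spectralRadius_le_of_blockSupNorm_mulVec_le fun v => ?_
    rw [← mulVec_mulVec, ← mulVec_mulVec]
    calc blockSupNorm (B2 *ᵥ (D *ᵥ (B1 *ᵥ v))) ≤ blockSupNorm (D *ᵥ (B1 *ᵥ v)) :=
          blockSupNorm_kronecker_one_mulVec_le A2 hA2pos (fun k => (hA2col k).le) _
      _ ≤ ‖D‖₊ * blockSupNorm (B1 *ᵥ v) :=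
          blockSupNorm_mulVec_le_of_blockDiagonal hDblock hDherm _
      _ ≤ ‖D‖₊ * blockSupNorm v :=
          mul_le_mul_right
            (blockSupNorm_kronecker_one_mulVec_le A1 hA1pos (fun k => (hA1col k).le) v) _
  exact ⟨hρ, hρ.trans_lt⟩
end
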